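/- Let b_ℓ be the Sylvester sequence for 1, i.e., b_1 = 2 and b_{ℓ+1} = b_ℓ(b_ℓ − 1) + 1. Then ∑_{ℓ=1}^∞ log(1 + b_ℓ²)/b_ℓ < 5/2. -/

import Mathlib

/-!
The first five terms are at most rational multiples of `log 2`, read off from inequalities
`(1 + b²)^q ≤ 2^p` between integers. Beyond them the sequence grows at least by a factor `4` per
step while `log (1 + x²) / x ≤ 4 / √x`, so the tail is dominated by a geometric series with
ratio `1/2`.
-/

/-- The Sylvester sequence of 1: `2, 3, 7, 43, 1807, …`. -/
def sylvOne : ℕ → ℕ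
  | 0 => 2
  | n + 1 => sylvOne n * (sylvOne n - 1) + 1

open Real Finset

lemma two_le_sylvOne (n : ℕ) : 2 ≤ sylvOne n := by
  induction n with
  | zero => rfl
  | succ n ih =>
    have : 2 * 1 ≤ sylvOne n * (sylvOne n - 1) := Nat.mul_le_mul ih (by omega)
    simp only [sylvOne]
    omega

lemma sylvOne_le_succ (n : ℕ) : sylvOne n ≤ sylvOne (n + 1) := by
  have : sylvOne n * 1 ≤ sylvOne n * (sylvOne n - 1) :=
    Nat.mul_le_mul_left _ (by have := two_le_sylvOne n; omega)
  simp only [sylvOne]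
  omega

lemma sylvOne_mono : Monotone sylvOne := monotone_nat_of_le_succ sylvOne_le_succ

lemma pow_mul_sylvOne_le (k n : ℕ) : (sylvOne k - 1) ^ n * sylvOne k ≤ sylvOne (n + k) := by
  induction n with
  | zero => simp
  | succ n ih =>
    have hk : sylvOne k ≤ sylvOne (n + k) := sylvOne_mono (by omega)
    calc (sylvOne k - 1) ^ (n + 1) * sylvOne k
        = (sylvOne k - 1) * ((sylvOne k - 1) ^ n * sylvOne k) := by ring
      _ ≤ (sylvOne (n + k) - 1) * sylvOne (n + k) := Nat.mul_le_mul (by omega) ih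
      _ ≤ sylvOne (n + 1 + k) := by
        rw [show n + 1 + k = n + k + 1 by omega, sylvOne, mul_comm]
        omega

lemma log_one_add_sq_le_two_mul {t : ℝ} (ht : 0 ≤ t) : log (1 + t ^ 2) ≤ 2 * t := by
  rw [log_le_iff_le_exp (by positivity)]
  have := quadratic_le_exp_of_nonneg (mul_nonneg zero_le_two ht)
  nlinarith

lemma log_one_add_sq_le_four_mul_sqrt {x : ℝ} (hx : 0 ≤ x) : log (1 + x ^ 2) ≤ 4 * √x := by
  have hsq : 1 + x ^ 2 ≤ (1 + √x ^ 2) ^ 2 := by rw [sq_sqrt hx]; nlinarith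
  calc log (1 + x ^ 2) ≤ log ((1 + √x ^ 2) ^ 2) := log_le_log (by positivity) hsq
    _ = 2 * log (1 + √x ^ 2) := by rw [log_pow]; norm_num
    _ ≤ 4 * √x := by linarith [log_one_add_sq_le_two_mul (sqrt_nonneg x)]

lemma log_one_add_sq_div_le {x : ℝ} (hx : 0 < x) : log (1 + x ^ 2) / x ≤ 4 / √x := by
  have hs : 0 < √x := sqrt_pos.mpr hx
  rw [div_le_div_iff₀ hx hs]
  calc log (1 + x ^ 2) * √x ≤ 4 * √x * √x := by
        gcongr; exact log_one_add_sq_le_four_mul_sqrt hx.le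
    _ = 4 * x := by rw [mul_assoc, mul_self_sqrt hx.le]

lemma log_le_of_pow_le_two_pow {x : ℝ} {p q : ℕ} (hx : 0 < x) (hq : 0 < q)
    (h : x ^ q ≤ 2 ^ p) : log x ≤ p / q * log 2 := by
  have := log_le_log (pow_pos hx q) h
  rw [log_pow, log_pow] at this
  rw [div_mul_eq_mul_div, le_div_iff₀ (by positivity)]
  linarith

lemma log_one_add_sq_div_le_of_pow_le {b p q : ℕ} (hq : 0 < q) (h : (1 + b ^ 2) ^ q ≤ 2 ^ p) :
    log (1 + (b : ℝ) ^ 2) / b ≤ p / q * log 2 / b :=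
  div_le_div_of_nonneg_right
    (log_le_of_pow_le_two_pow (by positivity) hq (by exact_mod_cast h)) (Nat.cast_nonneg b)

lemma sylvOne_five : sylvOne 5 = 3263443 := by decide

lemma sq_mul_pow_le_sylvOne_add_five (n : ℕ) :
    ((1806 : ℝ) * 2 ^ n) ^ 2 ≤ sylvOne (n + 5) := by
  have hgrowth := pow_mul_sylvOne_le 5 n
  rw [sylvOne_five] at hgrowth
  have h4 : 4 ^ n ≤ 3263442 ^ n := Nat.pow_le_pow_left (by norm_num) n
  have : (1806 * 2 ^ n) ^ 2 ≤ sylvOne (n + 5) := by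
    calc (1806 * 2 ^ n) ^ 2 = 4 ^ n * 3261636 := by
          rw [mul_pow, ← pow_mul, pow_mul']; ring
      _ ≤ 3263442 ^ n * 3263443 := Nat.mul_le_mul h4 (by norm_num)
      _ ≤ sylvOne (n + 5) := hgrowth
  exact_mod_cast this

lemma log_one_add_sq_div_sylvOne_add_five_le (n : ℕ) :
    log (1 + (sylvOne (n + 5) : ℝ) ^ 2) / sylvOne (n + 5) ≤ 4 / 1806 * (1 / 2) ^ n := by
  have hb : (0 : ℝ) < sylvOne (n + 5) :=
    Nat.cast_pos.mpr (by have := two_le_sylvOne (n + 5); omega)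
  have hsqrt : 1806 * 2 ^ n ≤ √(sylvOne (n + 5) : ℝ) :=
    le_sqrt_of_sq_le (sq_mul_pow_le_sylvOne_add_five n)
  calc log (1 + (sylvOne (n + 5) : ℝ) ^ 2) / sylvOne (n + 5)
        ≤ 4 / √(sylvOne (n + 5) : ℝ) := log_one_add_sq_div_le hb
    _ ≤ 4 / (1806 * 2 ^ n) := by gcongr
    _ = 4 / 1806 * (1 / 2) ^ n := by rw [one_div_pow, div_mul_div_comm, mul_one]

lemma sum_range_five_log_one_add_sq_div_sylvOne_le :
    ∑ ℓ ∈ range 5, log (1 + (sylvOne ℓ : ℝ) ^ 2) / sylvOne ℓ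
      ≤ (7 / 6 + 10 / 9 + 6 / 7 + 11 / 43 + 22 / 1807) * log 2 := by
  have h0 := log_one_add_sq_div_le_of_pow_le (b := 2) (p := 7) (q := 3)
    (by norm_num) (by norm_num)
  have h1 := log_one_add_sq_div_le_of_pow_le (b := 3) (p := 10) (q := 3)
    (by norm_num) (by norm_num)
  have h2 := log_one_add_sq_div_le_of_pow_le (b := 7) (p := 6) (q := 1)
    (by norm_num) (by norm_num)
  have h3 := log_one_add_sq_div_le_of_pow_le (b := 43) (p := 11) (q := 1)
    (by norm_num) (by norm_num)
  have h4 := log_one_add_sq_div_le_of_pow_le (b := 1807) (p := 22) (q := 1)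
    (by norm_num) (by norm_num)
  simp only [sum_range_succ, sum_range_zero, show sylvOne 0 = 2 from rfl,
    show sylvOne 1 = 3 from rfl, show sylvOne 2 = 7 from rfl, show sylvOne 3 = 43 from rfl,
    show sylvOne 4 = 1807 from rfl]
  push_cast at h0 h1 h2 h3 h4 ⊢
  linarith

theorem sum_log_one_add_sq_div_sylvOne_lt :
    Summable (fun ℓ : ℕ => Real.log (1 + (sylvOne ℓ : ℝ)^2) / (sylvOne ℓ : ℝ)) ∧
    ∑' ℓ : ℕ, Real.log (1 + (sylvOne ℓ : ℝ)^2) / (sylvOne ℓ : ℝ) < 5 / 2 := by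
  set f : ℕ → ℝ := fun ℓ => log (1 + (sylvOne ℓ : ℝ) ^ 2) / sylvOne ℓ
  have hgeom : Summable (fun n : ℕ => 4 / 1806 * (1 / 2 : ℝ) ^ n) :=
    summable_geometric_two.mul_left _
  have hf_nonneg (ℓ : ℕ) : 0 ≤ f ℓ :=
    div_nonneg (log_nonneg (le_add_of_nonneg_right (sq_nonneg _))) (Nat.cast_nonneg _)
  have htail : Summable (fun n => f (n + 5)) :=
    hgeom.of_nonneg_of_le (fun n => hf_nonneg _) log_one_add_sq_div_sylvOne_add_five_le
  have hf : Summable f := (summable_nat_add_iff 5).mp htail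
  refine ⟨hf, ?_⟩
  have htail_le : ∑' n, f (n + 5) ≤ 4 / 903 := by
    calc ∑' n, f (n + 5) ≤ ∑' n : ℕ, 4 / 1806 * (1 / 2 : ℝ) ^ n :=
          htail.tsum_le_tsum log_one_add_sq_div_sylvOne_add_five_le hgeom
      _ = 4 / 903 := by rw [tsum_mul_left, tsum_geometric_two]; norm_num
  rw [← hf.sum_add_tsum_nat_add 5]
  linarith [sum_range_five_log_one_add_sq_div_sylvOne_le, log_two_lt_d9]
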